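/- arXiv:2209.03251 — 2 statements merged into one kernel-verified Lean document; each statement's English description precedes it below -/
import Mathlib

section
/- Let B be a finite field with q = |B| elements and let F be a field extension of B of degree t. Let W ⊆ F be a B-linear subspace of dimension s with 0 < s < t, let L_W(x) = ∏_{w ∈ W}(x − w), and let c_0 ∈ F be the coefficient of x in L_W (which is nonzero). Let ℓ, d, k be positive integers with ℓ ≤ k ≤ ℓ + d and d ≥ ℓ·q^{s} − ℓ + k. Let β_1, …, β_ℓ, α_1, …, α_d be ℓ + d pairwise distinct elements of F and let κ_1, …, κ_ℓ ∈ F be nonzero. For each point ω among these n = ℓ + d points let λ(ω) = (∏_{ω' ≠ ω}(ω − ω'))^{-1}, the product over the other n − 1 points. Define g(x) = ∑_{j=1}^ℓ (κ_j / (c_0 λ(β_j))) · ∏_{m≠j}(x − β_m) / ∏_{m≠j}(β_j − β_m). Then for every polynomial f ∈ F[x] with deg f ≤ k − 1 and every u ∈ F: u · ∑_{j=1}^ℓ κ_j f(β_j) = − ∑_{j=1}^d g(α_j) · L_W( u · ∏_{m=1}^ℓ (α_j − β_m) ) · λ(α_j) · f(α_j) / ∏_{m=1}^ℓ (α_j −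 β_m). -/
open Finset Polynomial

/-- The subspace polynomial `L_W(x) = ∏_{w ∈ W} (x - w)`. -/
noncomputable def subspacePoly {B F : Type*} [Field B] [Field F] [Finite F] [Algebra B F]
    (W : Submodule B F) : Polynomial F :=
  ∏ w ∈ (Set.toFinite (W : Set F)).toFinset, (Polynomial.X - Polynomial.C w)

/-- The dual-GRS multiplier `λ(ω) = (∏_{ω' ≠ ω} (ω - ω'))⁻¹` attached to each of the
`ℓ + d` evaluation points `β 1, …, β ℓ, α 1, …, α d` (indexed by `Fin ℓ ⊕ Fin d`). -/
noncomputable def lamPt {F : Type*} [Field F] {ℓ d : ℕ}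
    (β : Fin ℓ → F) (α : Fin d → F) (i : Fin ℓ ⊕ Fin d) : F :=
  (∏ j ∈ Finset.univ.erase i, (Sum.elim β α i - Sum.elim β α j))⁻¹

/-- `g(x) = ∑_j (κ_j / (c₀ λ(β_j))) ∏_{m ≠ j}(x - β_m) / ∏_{m ≠ j}(β_j - β_m)`, where
`c₀` is the coefficient of `x` in the subspace polynomial `L_W`. -/
noncomputable def gFunW {B F : Type*} [Field B] [Field F] [Finite F] [Algebra B F]
    (W : Submodule B F) {ℓ d : ℕ}
    (β : Fin ℓ → F) (α : Fin d → F) (κ : Fin ℓ → F) (x : F) : F :=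
  ∑ j : Fin ℓ, (κ j / ((subspacePoly (B := B) W).coeff 1 * lamPt β α (Sum.inl j))) *
    (∏ m ∈ Finset.univ.erase j, (x - β m)) / (∏ m ∈ Finset.univ.erase j, (β j - β m))

/-! The weights `λ` make the points `β_j, α_j` a dual Reed–Solomon code: `∑_ω λ(ω) P(ω)` is the
coefficient of `x^{ℓ+d-1}` in the Lagrange interpolant of `P`, hence vanishes when
`deg P < ℓ + d - 1`. Since `L_W(0) = 0`, we can write `L_W(u z) = z R(z)` with `R(0) = u c₀`, and we
apply this to `P = g · f · R(Z)` with `Z = ∏_m (x - β_m)`. At `β_j` we have `Z = 0` and `g`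
interpolates `κ_j / (c₀ λ(β_j))`, so the term is `u κ_j f(β_j)`. At `α_j` the term is the summand
on the right. The hypothesis `d ≥ ℓ q^s - ℓ + k` is exactly `deg P < ℓ + d - 1`. -/
theorem Lagrange.sum_eval_div_prod_sub_eq_zero {F ι : Type*} [Field F] [DecidableEq ι]
    {s : Finset ι} {v : ι → F} (hvs : Set.InjOn v s) {P : F[X]} (hP : P.degree < ↑(#s - 1)) :
    ∑ i ∈ s, P.eval (v i) / ∏ j ∈ s.erase i, (v i - v j) = 0 := by
  rw [← Lagrange.coeff_eq_sum hvs (hP.trans_le (by exact_mod_cast Nat.sub_le _ _)),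
    coeff_eq_zero_of_degree_lt hP]

theorem Polynomial.natDegree_le_sub_one_of_degree_lt {R : Type*} [Semiring R] {p : R[X]} {n : ℕ}
    (h : p.degree < n) : p.natDegree ≤ n - 1 := by
  obtain rfl | hp := eq_or_ne p 0
  · simp
  · exact Nat.le_sub_one_of_lt ((natDegree_lt_iff_degree_lt hp).mpr h)

theorem Polynomial.mul_eval_divX {R : Type*} [CommRing R] {p : R[X]} (hp : p.coeff 0 = 0)
    (x : R) : x * p.divX.eval x = p.eval x := by
  conv_rhs => rw [← X_mul_divX_add p]
  simp [hp]

section SubspacePoly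

variable {B F : Type*} [Field B] [Field F] [Finite F] [Algebra B F] (W : Submodule B F)

theorem natDegree_subspacePoly [Fintype B] :
    (subspacePoly (B := B) W).natDegree = Fintype.card B ^ Module.finrank B W := by
  classical
  have : Fintype W := Fintype.ofFinite W
  rw [subspacePoly, natDegree_prod _ _ fun w _ => X_sub_C_ne_zero w, ← Module.card_eq_pow_finrank]
  simp only [natDegree_X_sub_C, sum_const, smul_eq_mul, mul_one]
  exact Set.Finite.card_toFinset _

theorem subspacePoly_eq_X_mul [DecidableEq F] :
    subspacePoly (B := B) W = X * ∏ w ∈ (Set.toFinite (W : Set F)).toFinset.erase 0, (X - C w) := by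
  rw [subspacePoly, ← mul_prod_erase _ _ (by simp : (0 : F) ∈ (Set.toFinite (W : Set F)).toFinset),
    C_0, sub_zero]

theorem coeff_zero_subspacePoly : (subspacePoly (B := B) W).coeff 0 = 0 := by
  classical
  rw [subspacePoly_eq_X_mul, coeff_X_mul_zero]

theorem coeff_one_subspacePoly_ne_zero : (subspacePoly (B := B) W).coeff 1 ≠ 0 := by
  classical
  rw [subspacePoly_eq_X_mul, coeff_X_mul, coeff_zero_eq_eval_zero, eval_prod, prod_ne_zero_iff]
  intro w hw
  simpa using (mem_erase.mp hw).1

end SubspacePoly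

theorem lamPt_ne_zero {F : Type*} [Field F] {ℓ d : ℕ} {β : Fin ℓ → F} {α : Fin d → F}
    (hinj : Function.Injective (Sum.elim β α)) (i : Fin ℓ ⊕ Fin d) : lamPt β α i ≠ 0 :=
  inv_ne_zero <| prod_ne_zero_iff.mpr fun _ hj =>
    sub_ne_zero.mpr fun h => (mem_erase.mp hj).1 (hinj h).symm

theorem sum_lamPt_mul_eval_eq_zero {F : Type*} [Field F] {ℓ d : ℕ} {β : Fin ℓ → F}
    {α : Fin d → F} (hinj : Function.Injective (Sum.elim β α)) {P : F[X]}
    (hP : P.degree < ↑(ℓ + d - 1)) :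
    ∑ j, lamPt β α (Sum.inl j) * P.eval (β j) + ∑ j, lamPt β α (Sum.inr j) * P.eval (α j) = 0 := by
  have := Lagrange.sum_eval_div_prod_sub_eq_zero (s := univ) hinj.injOn (P := P) (by simpa using hP)
  simpa [Fintype.sum_sum_type, lamPt, div_eq_inv_mul] using this

section ParityCheck

variable {B F : Type*} [Field B] [Field F] [Finite F] [Algebra B F] (W : Submodule B F)
  {ℓ d : ℕ} (β : Fin ℓ → F) (α : Fin d → F) (κ : Fin ℓ → F)

noncomputable def gPoly : F[X] :=
  Lagrange.interpolate univ β fun j =>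
    κ j / ((subspacePoly (B := B) W).coeff 1 * lamPt β α (Sum.inl j))

theorem eval_gPoly (x : F) : (gPoly W β α κ).eval x = gFunW (B := B) W β α κ x := by
  simp only [gPoly, gFunW, Lagrange.interpolate_apply, eval_finsetSum, eval_mul, eval_C,
    Lagrange.basis, Lagrange.basisDivisor, eval_prod, eval_sub, eval_X, prod_mul_distrib,
    prod_inv_distrib]
  exact sum_congr rfl fun j _ => by ring

theorem eval_gPoly_node (hβ : Function.Injective β) (j : Fin ℓ) :
    (gPoly W β α κ).eval (β j) =
      κ j / ((subspacePoly (B := B) W).coeff 1 * lamPt β α (Sum.inl j)) :=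
  Lagrange.eval_interpolate_at_node _ hβ.injOn (mem_univ j)

theorem natDegree_gPoly_le (hβ : Function.Injective β) : (gPoly W β α κ).natDegree ≤ ℓ - 1 := by
  refine natDegree_le_of_degree_le ((Lagrange.degree_interpolate_le _ hβ.injOn).trans ?_)
  simp

noncomputable def parityCheckPoly (f : F[X]) (u : F) : F[X] :=
  gPoly W β α κ * f *
    (C u * (subspacePoly (B := B) W).divX.comp (C u * Lagrange.nodal univ β))

theorem natDegree_parityCheckPoly_le [Fintype B] (hβ : Function.Injective β) (f : F[X]) (u : F) :
    (parityCheckPoly W β α κ f u).natDegree ≤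
      (ℓ - 1) + f.natDegree + (Fintype.card B ^ Module.finrank B W - 1) * ℓ := by
  have hG := natDegree_gPoly_le W β α κ hβ
  have hR : (C u * (subspacePoly (B := B) W).divX.comp (C u * Lagrange.nodal univ β)).natDegree ≤
      (Fintype.card B ^ Module.finrank B W - 1) * ℓ := by
    refine (natDegree_C_mul_le _ _).trans (natDegree_comp_le.trans (Nat.mul_le_mul ?_ ?_))
    · rw [natDegree_divX_eq_natDegree_tsub_one, natDegree_subspacePoly]
    · simpa [Lagrange.natDegree_nodal] using natDegree_C_mul_le u (Lagrange.nodal univ β)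
  exact natDegree_mul_le.trans (add_le_add (natDegree_mul_le.trans (by omega)) hR)

theorem lamPt_mul_eval_parityCheckPoly_inl (hinj : Function.Injective (Sum.elim β α))
    (f : F[X]) (u : F) (j : Fin ℓ) :
    lamPt β α (Sum.inl j) * (parityCheckPoly W β α κ f u).eval (β j) =
      u * (κ j * f.eval (β j)) := by
  have hc : (subspacePoly (B := B) W).coeff 1 ≠ 0 := coeff_one_subspacePoly_ne_zero W
  have hlam := lamPt_ne_zero hinj (Sum.inl j)
  simp only [parityCheckPoly, eval_mul, eval_C, eval_comp,
    Lagrange.eval_nodal_at_node (mem_univ j), mul_zero, ← coeff_zero_eq_eval_zero, coeff_divX,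
    eval_gPoly_node W β α κ (hinj.comp Sum.inl_injective)]
  field_simp

theorem lamPt_mul_eval_parityCheckPoly_inr (hinj : Function.Injective (Sum.elim β α))
    (f : F[X]) (u : F) (j : Fin d) :
    lamPt β α (Sum.inr j) * (parityCheckPoly W β α κ f u).eval (α j) =
      gFunW (B := B) W β α κ (α j) * (subspacePoly (B := B) W).eval (u * ∏ m, (α j - β m)) *
        lamPt β α (Sum.inr j) * f.eval (α j) / ∏ m, (α j - β m) := by
  have hz : ∏ m, (α j - β m) ≠ 0 := prod_ne_zero_iff.mpr fun m _ =>
    sub_ne_zero.mpr fun h => Sum.inr_ne_inl (hinj h)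
  rw [← mul_eval_divX (coeff_zero_subspacePoly W)]
  simp only [parityCheckPoly, eval_mul, eval_C, eval_comp, Lagrange.eval_nodal,
    eval_gPoly]
  field_simp

end ParityCheck

theorem scheme2_parity_check_identity_general {B F : Type*} [Field B] [Fintype B]
    [Field F] [Fintype F] [Algebra B F]
    (s : ℕ)
    (W : Submodule B F) (hWs : Module.finrank B W = s)
    (ℓ d k : ℕ) (hℓ : 0 < ℓ) (hk : 0 < k)
    (hdbig : ℓ * Fintype.card B ^ s - ℓ + k ≤ d)
    (β : Fin ℓ → F) (α : Fin d → F)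
    (hinj : Function.Injective (Sum.elim β α))
    (κ : Fin ℓ → F)
    (f : Polynomial F) (hf : f.degree < (k : WithBot ℕ)) (u : F) :
    u * ∑ j, κ j * f.eval (β j) =
      - ∑ j : Fin d,
          gFunW (B := B) W β α κ (α j) *
          (subspacePoly (B := B) W).eval (u * ∏ m, (α j - β m)) *
          lamPt β α (Sum.inr j) * f.eval (α j) / ∏ m, (α j - β m) := by
  subst hWs
  have hdeg : (parityCheckPoly W β α κ f u).degree < ↑(ℓ + d - 1) := by
    have hP := natDegree_parityCheckPoly_le W β α κ (hinj.comp Sum.inl_injective) f u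
    have hf' := natDegree_le_sub_one_of_degree_lt hf
    rw [Nat.sub_one_mul, Nat.mul_comm _ ℓ] at hP
    exact degree_le_natDegree.trans_lt (by exact_mod_cast (by omega))
  have key := sum_lamPt_mul_eval_eq_zero hinj hdeg
  simp only [lamPt_mul_eval_parityCheckPoly_inl W β α κ hinj,
    lamPt_mul_eval_parityCheckPoly_inr W β α κ hinj, ← mul_sum] at key
  exact eq_neg_of_add_eq_zero_left key

/-- The key parity-check identity underlying Scheme 2 (subspace-polynomial based
evaluation): for all `f` with `deg f ≤ k - 1` and all `u ∈ F`,
`u ∑_j κ_j f(β_j) = - ∑_j g(α_j) L_W(u ∏_m (α_j - β_m)) λ(α_j) f(α_j) / ∏_m (α_j - β_m)`. -/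
theorem scheme2_parity_check_identity {B F : Type*} [Field B] [Fintype B]
    [Field F] [Fintype F] [DecidableEq F] [Algebra B F]
    (t s : ℕ) (ht : Module.finrank B F = t)
    (W : Submodule B F) (hWs : Module.finrank B W = s) (hs0 : 0 < s) (hst : s < t)
    (ℓ d k : ℕ) (hℓ : 0 < ℓ) (hd : 0 < d) (hk : 0 < k)
    (hℓk : ℓ ≤ k) (hkℓd : k ≤ ℓ + d)
    (hdbig : ℓ * Fintype.card B ^ s - ℓ + k ≤ d)
    (β : Fin ℓ → F) (α : Fin d → F)
    (hinj : Function.Injective (Sum.elim β α))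
    (κ : Fin ℓ → F) (hκ : ∀ i, κ i ≠ 0)
    (f : Polynomial F) (hf : f.degree < (k : WithBot ℕ)) (u : F) :
    u * ∑ j, κ j * f.eval (β j) =
      - ∑ j : Fin d,
          gFunW (B := B) W β α κ (α j) *
          (subspacePoly (B := B) W).eval (u * ∏ m, (α j - β m)) *
          lamPt β α (Sum.inr j) * f.eval (α j) / ∏ m, (α j - β m) :=
  scheme2_parity_check_identity_general s W hWs ℓ d k hℓ hk hdbig β α hinj κ f hf u
end

section
/- Let B be a finite field and F a field extension of B of degree t. Let ℓ, d, k be positive integers with ℓ ≤ k ≤ ℓ + d − 1, let β_1, …, β_ℓ, α_1, …, α_d be ℓ + d pairwise distinct elements of F, and let C = RS({β_1,…,β_ℓ,α_1,…,α_d}, k). Set L = ( (|F| − 1)(ℓ + d − k − 1) + d ) / |F|, suppose log_{|B|}(d/L) is not an integer, and define n_0 and b_min as: n_0 = ⌊ (L − d·|B|^{−⌈log_{|B|}(d/L)⌉}) / (|B|^{−⌊log_{|B|}(d/L)⌋} − |B|^{−⌈log_{|B|}(d/L)⌉}) ⌋ and b_min = n_0·⌊log_{|B|}(d/L)⌋ +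 (d − n_0)·⌈log_{|B|}(d/L)⌉. Then any B-linear repair scheme that recovers all of c_1, …, c_ℓ from the remaining d symbols has bandwidth at least b_min: if g_j : F → B^{b_j} (j ∈ [d]) are B-linear maps and h : B^{b_1} × ⋯ × B^{b_d} → F^ℓ is a B-linear map with h(g_1(c_{ℓ+1}), …, g_d(c_{ℓ+d})) = (c_1, …, c_ℓ) for every codeword c ∈ C, then ∑_{j=1}^d b_j ≥ b_min. -/
/-!
Fix one erased position `β`. Composing the download maps with the `β`-coordinate of the
recovery map gives `B`-linear maps `φ_j : F → F` of rank at most `b_j` with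
`f(β) = ∑_j φ_j(f(α_j))` whenever `deg f < k`. Passing to the adjoints `Λ_j` of the `φ_j` for the
trace form and applying this to `μ f`, every `γ ∈ F` yields the dual codeword
`γ f(β) = ∑_j Λ_j(γ) f(α_j)`, so for `γ ≠ 0` at least `k` of the `Λ_j(γ)` are nonzero.
Double counting the pairs `(γ, j)` with `Λ_j(γ) = 0`, together with `|ker Λ_j| ≥ |F| |B|^{-b_j}`,
gives `∑_j |B|^{-b_j} ≤ L`. Finally `n ↦ |B|^{-n}` is convex, so on the integers it lies above its
chord through `⌊log_{|B|}(d/L)⌋` and `⌊log_{|B|}(d/L)⌋ + 1 = ⌈log_{|B|}(d/L)⌉`; summing this chord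
inequality over `j` bounds `∑_j b_j` from below by `b_min`.
-/

open Finset Polynomial Real

section
variable {K L : Type*} [Field K] [Field L] [Algebra K L] [FiniteDimensional K L]
  [Algebra.IsSeparable K L]

theorem eq_of_forall_trace_mul_eq {x y : L}
    (h : ∀ μ, Algebra.trace K L (μ * x) = Algebra.trace K L (μ * y)) : x = y := by
  refine sub_eq_zero.1 ((traceForm_nondegenerate K L).2 _ fun μ => ?_)
  simp [mul_sub, h μ]

noncomputable def traceAdjoint (φ : L →ₗ[K] L) : L →ₗ[K] L :=
  let E := (Algebra.traceForm K L).toDual (traceForm_nondegenerate K L)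
  E.symm.toLinearMap ∘ₗ φ.dualMap ∘ₗ E.toLinearMap

theorem trace_traceAdjoint_mul (φ : L →ₗ[K] L) (γ x : L) :
    Algebra.trace K L (traceAdjoint φ γ * x) = Algebra.trace K L (γ * φ x) := by
  rw [← Algebra.traceForm_apply, traceAdjoint]
  exact LinearMap.BilinForm.apply_toDual_symm_apply (hB := traceForm_nondegenerate K L) _ _

theorem finrank_range_traceAdjoint (φ : L →ₗ[K] L) :
    Module.finrank K (LinearMap.range (traceAdjoint φ)) =
      Module.finrank K (LinearMap.range φ) := by
  rw [traceAdjoint, ← LinearMap.comp_assoc, LinearEquiv.range_comp, LinearMap.range_comp,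
    LinearEquiv.finrank_map_eq, LinearMap.finrank_range_dualMap_eq_finrank_range]

end

theorem le_card_filter_ne_zero_of_mul_eval_eq_sum {F ι : Type*} [Field F] [DecidableEq F]
    [Fintype ι] {k : ℕ} {α : ι → F} {β : F} (hβ : ∀ j, α j ≠ β) {c : F} (hc : c ≠ 0)
    {w : ι → F} (hw : ∀ f : F[X], f.degree < k → c * f.eval β = ∑ j, w j * f.eval (α j)) :
    k ≤ #{j | w j ≠ 0} := by
  by_contra! hlt
  set S : Finset ι := {j | w j ≠ 0}
  set f : F[X] := ∏ j ∈ S, (X - C (α j))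
  have hdeg : f.degree < k := by
    simpa [f, degree_prod] using hlt
  have hvanish : ∑ j, w j * f.eval (α j) = 0 := by
    refine Finset.sum_eq_zero fun j _ => ?_
    by_cases hj : j ∈ S
    · simp [f, eval_prod, Finset.prod_eq_zero hj]
    · simp [show w j = 0 by simpa [S] using hj]
  have hβf : f.eval β ≠ 0 := by
    simp [f, eval_prod, Finset.prod_ne_zero_iff, sub_eq_zero, Ne.symm (hβ _)]
  exact mul_ne_zero hc hβf (hvanish ▸ hw f hdeg)

theorem sum_card_filter_eq_zero_add_le {ι V W : Type*} [Fintype ι] [Fintype V] [Zero V]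
    [Zero W] [DecidableEq W] {k : ℕ} (Λ : ι → V → W)
    (hk : ∀ v ≠ 0, k ≤ #{j | Λ j v ≠ 0}) :
    ∑ j, #{v | Λ j v = 0} + (Fintype.card V - 1) * k ≤ Fintype.card V * Fintype.card ι := by
  classical
  have hswap : ∑ j, #{v | Λ j v = 0} = ∑ v, #{j | Λ j v = 0} := by
    simp only [Finset.card_filter]
    exact Finset.sum_comm
  have hnonzero : (Fintype.card V - 1) * k ≤ ∑ v, #{j | Λ j v ≠ 0} := by
    calc (Fintype.card V - 1) * k = #((univ : Finset V).erase 0) • k := by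
          rw [card_erase_of_mem (mem_univ _), card_univ, smul_eq_mul]
      _ ≤ ∑ v ∈ univ.erase 0, #{j | Λ j v ≠ 0} :=
          card_nsmul_le_sum _ _ _ fun v hv => hk v (ne_of_mem_erase hv)
      _ ≤ ∑ v, #{j | Λ j v ≠ 0} := sum_le_sum_of_subset (erase_subset _ _)
  have hsplit :
      ∑ v, (#{j | Λ j v = 0} + #{j | Λ j v ≠ 0}) = Fintype.card V * Fintype.card ι := by
    simp [card_filter_add_card_filter_not]
  rw [sum_add_distrib] at hsplit
  omega

theorem card_le_card_filter_eq_zero_mul_pow {K V W : Type*} [Field K] [Fintype K]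
    [AddCommGroup V] [Module K V] [Fintype V] [AddCommGroup W] [Module K W] [DecidableEq W]
    (f : V →ₗ[K] W) {b : ℕ} (hb : Module.finrank K (LinearMap.range f) ≤ b) :
    Fintype.card V ≤ #{v | f v = 0} * Fintype.card K ^ b := by
  classical
  have hker : #{v | f v = 0} = Fintype.card (LinearMap.ker f) := by
    rw [← Fintype.card_subtype]
    exact Fintype.card_congr (Equiv.subtypeEquivRight fun _ => LinearMap.mem_ker.symm)
  rw [hker, Module.card_eq_pow_finrank (K := K) (V := V),
    Module.card_eq_pow_finrank (K := K) (V := LinearMap.ker f), ← pow_add,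
    ← f.finrank_range_add_finrank_ker]
  exact Nat.pow_le_pow_right Fintype.card_pos (by omega)

theorem mul_eval_eq_sum_traceAdjoint {K F ι : Type*} [Field K] [Field F] [Algebra K F]
    [FiniteDimensional K F] [Algebra.IsSeparable K F] [Fintype ι] {k : ℕ} {α : ι → F} {β : F}
    {φ : ι → F →ₗ[K] F}
    (hφ : ∀ f : F[X], f.degree < k → f.eval β = ∑ j, φ j (f.eval (α j)))
    (γ : F) {f : F[X]} (hf : f.degree < k) :
    γ * f.eval β = ∑ j, traceAdjoint (φ j) γ * f.eval (α j) := by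
  refine eq_of_forall_trace_mul_eq (K := K) fun μ => ?_
  have hμf : (μ • f).degree < k := (degree_smul_le μ f).trans_lt hf
  calc Algebra.trace K F (μ * (γ * f.eval β))
      = Algebra.trace K F (γ * (μ • f).eval β) := by rw [eval_smul, smul_eq_mul]; ring_nf
    _ = ∑ j, Algebra.trace K F (γ * φ j ((μ • f).eval (α j))) := by
        rw [hφ _ hμf, mul_sum, map_sum]
    _ = ∑ j, Algebra.trace K F (traceAdjoint (φ j) γ * (μ * f.eval (α j))) := by
        simp only [trace_traceAdjoint_mul, eval_smul, smul_eq_mul]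
    _ = Algebra.trace K F (μ * ∑ j, traceAdjoint (φ j) γ * f.eval (α j)) := by
        rw [mul_sum, map_sum]; simp only [mul_left_comm]

theorem card_mul_sum_zpow_neg_le {K F ι : Type*} [Field K] [Fintype K] [Field F] [Fintype F]
    [Algebra K F] [Fintype ι] {k : ℕ} {α : ι → F} {β : F} (hβ : ∀ j, α j ≠ β) (b : ι → ℕ)
    (φ : ι → F →ₗ[K] F) (hφb : ∀ j, Module.finrank K (LinearMap.range (φ j)) ≤ b j)
    (hφ : ∀ f : F[X], f.degree < k → f.eval β = ∑ j, φ j (f.eval (α j))) :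
    (Fintype.card F : ℝ) * ∑ j, (Fintype.card K : ℝ) ^ (-(b j : ℤ)) ≤
      (Fintype.card F - 1) * (Fintype.card ι - k) + Fintype.card ι := by
  classical
  let Λ := fun j => traceAdjoint (φ j)
  have hsupport : ∀ γ ≠ 0, k ≤ #{j | Λ j γ ≠ 0} := fun γ hγ =>
    le_card_filter_ne_zero_of_mul_eval_eq_sum hβ hγ fun _ hf =>
      mul_eval_eq_sum_traceAdjoint hφ γ hf
  have hker : ∀ j, (Fintype.card F : ℝ) * (Fintype.card K : ℝ) ^ (-(b j : ℤ)) ≤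
      #{γ | Λ j γ = 0} := by
    intro j
    have := card_le_card_filter_eq_zero_mul_pow (Λ j)
      ((finrank_range_traceAdjoint _).trans_le (hφb j))
    rw [zpow_neg, zpow_natCast, ← div_eq_mul_inv, div_le_iff₀ (by positivity)]
    exact_mod_cast this
  have hcount := sum_card_filter_eq_zero_add_le (fun j => ⇑(Λ j)) hsupport
  calc (Fintype.card F : ℝ) * ∑ j, (Fintype.card K : ℝ) ^ (-(b j : ℤ))
      ≤ ∑ j, (#{γ | Λ j γ = 0} : ℝ) := by rw [mul_sum]; exact sum_le_sum fun j _ => hker j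
    _ ≤ (Fintype.card F - 1) * (Fintype.card ι - k) + Fintype.card ι := by
        have : ((∑ j, #{γ | Λ j γ = 0} + (Fintype.card F - 1) * k : ℕ) : ℝ) ≤
            (Fintype.card F * Fintype.card ι : ℕ) := by exact_mod_cast hcount
        push_cast [Nat.cast_sub Fintype.card_pos] at this
        linarith

theorem one_add_mul_sub_le_zpow {q : ℝ} (hq : 0 < q) (n : ℤ) : 1 + n * (q - 1) ≤ q ^ n := by
  obtain ⟨m, rfl | rfl⟩ := n.eq_nat_or_neg
  · simpa using one_add_mul_sub_le_pow (by linarith : (-1 : ℝ) ≤ q) m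
  · have hinv := one_add_mul_sub_le_pow (by linarith [inv_pos.2 hq] : (-1 : ℝ) ≤ q⁻¹) m
    have hq' : 1 - q ≤ q⁻¹ - 1 := by
      rw [← sub_nonneg, show q⁻¹ - 1 - (1 - q) = (q - 1) ^ 2 / q by field_simp; ring]
      positivity
    rw [zpow_neg, zpow_natCast, ← inv_pow]
    push_cast
    nlinarith [mul_le_mul_of_nonneg_left hq' m.cast_nonneg]

theorem mul_zpow_neg_sub_zpow_neg_le {q : ℝ} (hq : 0 < q) (m n : ℤ) :
    (m + 1 - n) * (q ^ (-m) - q ^ (-(m + 1))) ≤ q ^ (-n) - q ^ (-(m + 1)) := by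
  have hu : 0 ≤ q ^ (-(m + 1)) := by positivity
  have hm : q ^ (-m) = q ^ (-(m + 1)) * q := by
    rw [← zpow_add_one₀ hq.ne']; ring_nf
  have hn : q ^ (-n) = q ^ (-(m + 1)) * q ^ (m + 1 - n) := by
    rw [← zpow_add₀ hq.ne']; ring_nf
  have := mul_le_mul_of_nonneg_left (one_add_mul_sub_le_zpow hq (m + 1 - n)) hu
  rw [hm, hn]
  push_cast at this
  linarith

theorem card_mul_add_one_sub_sum_le_floor {ι : Type*} [Fintype ι] {q : ℝ} (hq : 1 < q)
    (b : ι → ℤ) (m : ℤ) {L : ℝ} (hL : ∑ j, q ^ (-b j) ≤ L) :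
    Fintype.card ι * (m + 1) - ∑ j, b j ≤
      ⌊(L - Fintype.card ι * q ^ (-(m + 1))) / (q ^ (-m) - q ^ (-(m + 1)))⌋ := by
  have hq0 : 0 < q := by linarith
  have hgap : 0 < q ^ (-m) - q ^ (-(m + 1)) :=
    sub_pos.2 (zpow_lt_zpow_right₀ hq (by omega))
  rw [Int.le_floor, le_div_iff₀ hgap]
  have := sum_le_sum fun j (_ : j ∈ univ) => mul_zpow_neg_sub_zpow_neg_le hq0 m (b j)
  simp only [← sum_mul, sum_sub_distrib, sum_const, card_univ, nsmul_eq_mul] at this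
  push_cast
  linarith

theorem card_mul_sum_zpow_neg_le_of_repair {B F : Type*} [Field B] [Fintype B] [Field F]
    [Fintype F] [Algebra B F] {ℓ d k : ℕ} {β : Fin ℓ → F} {α : Fin d → F}
    (hinj : Function.Injective (Sum.elim β α)) (b : Fin d → ℕ)
    (g : (j : Fin d) → (F →ₗ[B] (Fin (b j) → B)))
    (h : ((j : Fin d) → (Fin (b j) → B)) →ₗ[B] (Fin ℓ → F))
    (hscheme : ∀ f : Polynomial F, f.degree < (k : WithBot ℕ) →
      h (fun j => g j (f.eval (α j))) = fun i => f.eval (β i)) (i : Fin ℓ) :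
    (Fintype.card F : ℝ) * ∑ j, (Fintype.card B : ℝ) ^ (-(b j : ℤ)) ≤
      (Fintype.card F - 1) * (d - k) + d := by
  classical
  let φ : Fin d → F →ₗ[B] F := fun j =>
    (LinearMap.proj i ∘ₗ h ∘ₗ LinearMap.single B _ j) ∘ₗ g j
  have hφb : ∀ j, Module.finrank B (LinearMap.range (φ j)) ≤ b j := fun j =>
    (Submodule.finrank_mono (LinearMap.range_comp_le_range _ _)).trans
      ((LinearMap.finrank_range_le _).trans_eq (Module.finrank_fin_fun B))
  have hφ : ∀ f : F[X], f.degree < k → f.eval (β i) = ∑ j, φ j (f.eval (α j)) := by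
    intro f hf
    rw [← congrFun (hscheme f hf) i, ← univ_sum_single fun j => g j (f.eval (α j)), map_sum,
      Finset.sum_apply]
    rfl
  have hβ : ∀ j, α j ≠ β i := fun j hj => by
    simpa using hinj (a₁ := .inr j) (a₂ := .inl i) hj
  simpa using card_mul_sum_zpow_neg_le hβ b φ hφb hφ

theorem repair_bandwidth_lower_bound_general {B F : Type*} [Field B] [Fintype B]
    [Field F] [Fintype F] [Algebra B F]
    (ℓ d k : ℕ) (hℓ : 0 < ℓ)
    (β : Fin ℓ → F) (α : Fin d → F)
    (hinj : Function.Injective (Sum.elim β α))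
    (L : ℝ)
    (hL : L = (((Fintype.card F : ℝ) - 1) * ((ℓ : ℝ) + d - k - 1) + d) /
      (Fintype.card F : ℝ))
    (hnotint : ¬ ∃ z : ℤ, Real.logb (Fintype.card B) ((d : ℝ) / L) = z)
    (fl cl n₀ : ℤ)
    (hfl : fl = ⌊Real.logb (Fintype.card B) ((d : ℝ) / L)⌋)
    (hcl : cl = ⌈Real.logb (Fintype.card B) ((d : ℝ) / L)⌉)
    (hn₀ : n₀ = ⌊(L - (d : ℝ) * (Fintype.card B : ℝ) ^ (-cl)) /
      ((Fintype.card B : ℝ) ^ (-fl) - (Fintype.card B : ℝ) ^ (-cl))⌋)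
    (b : Fin d → ℕ)
    (g : (j : Fin d) → (F →ₗ[B] (Fin (b j) → B)))
    (h : ((j : Fin d) → (Fin (b j) → B)) →ₗ[B] (Fin ℓ → F))
    (hscheme : ∀ f : Polynomial F, f.degree < (k : WithBot ℕ) →
      h (fun j => g j (f.eval (α j))) = fun i => f.eval (β i)) :
    n₀ * fl + ((d : ℤ) - n₀) * cl ≤ ∑ j, (b j : ℤ) := by
  have hcl : cl = fl + 1 := by
    rw [hcl, hfl, Int.ceil_eq_floor_add_one_iff_notMem]
    exact fun ⟨z, hz⟩ => hnotint ⟨z, hz.symm⟩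
  have hfeas : ∑ j, (Fintype.card B : ℝ) ^ (-(b j : ℤ)) ≤ L := by
    have hrepair := card_mul_sum_zpow_neg_le_of_repair hinj b g h hscheme ⟨0, hℓ⟩
    have hF : (1 : ℝ) ≤ Fintype.card F := by exact_mod_cast Fintype.card_pos
    have hℓ' : (1 : ℝ) ≤ ℓ := by exact_mod_cast hℓ
    rw [hL, le_div_iff₀ (by positivity)]
    nlinarith
  have hq : (1 : ℝ) < Fintype.card B := by exact_mod_cast Fintype.one_lt_card
  have hn₀' := card_mul_add_one_sub_sum_le_floor hq (fun j => (b j : ℤ)) fl hfeas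
  rw [Fintype.card_fin, ← hcl, ← hn₀] at hn₀'
  have hbmin : n₀ * fl + ((d : ℤ) - n₀) * cl = d * cl - n₀ := by rw [hcl]; ring
  linarith

/-- The lower bound on the repair bandwidth of `ℓ` erasures (Corollary 3): every
`B`-linear repair scheme recovering `c_1, …, c_ℓ` (i.e. `f(β_1), …, f(β_ℓ)`) of the
Reed–Solomon code on the distinct points `β_1,…,β_ℓ,α_1,…,α_d` from the remaining `d`
symbols has bandwidth `∑_j b_j ≥ b_min`, where, with
`L = ((|F|-1)(ℓ+d-k-1)+d)/|F|` (and `log_{|B|}(d/L)` not an integer),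
`n₀ = ⌊(L - d|B|^{-⌈log_{|B|}(d/L)⌉}) / (|B|^{-⌊log_{|B|}(d/L)⌋} - |B|^{-⌈log_{|B|}(d/L)⌉})⌋`
and `b_min = n₀⌊log_{|B|}(d/L)⌋ + (d - n₀)⌈log_{|B|}(d/L)⌉`. -/
theorem repair_bandwidth_lower_bound {B F : Type*} [Field B] [Fintype B]
    [Field F] [Fintype F] [Algebra B F]
    (t : ℕ) (ht : Module.finrank B F = t)
    (ℓ d k : ℕ) (hℓ : 0 < ℓ) (hd : 0 < d) (hk : 0 < k)
    (hℓk : ℓ ≤ k) (hkℓd : k ≤ ℓ + d - 1)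
    (β : Fin ℓ → F) (α : Fin d → F)
    (hinj : Function.Injective (Sum.elim β α))
    (L : ℝ)
    (hL : L = (((Fintype.card F : ℝ) - 1) * ((ℓ : ℝ) + d - k - 1) + d) /
      (Fintype.card F : ℝ))
    (hnotint : ¬ ∃ z : ℤ, Real.logb (Fintype.card B) ((d : ℝ) / L) = z)
    (fl cl n₀ : ℤ)
    (hfl : fl = ⌊Real.logb (Fintype.card B) ((d : ℝ) / L)⌋)
    (hcl : cl = ⌈Real.logb (Fintype.card B) ((d : ℝ) / L)⌉)
    (hn₀ : n₀ = ⌊(L - (d : ℝ) * (Fintype.card B : ℝ) ^ (-cl)) /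
      ((Fintype.card B : ℝ) ^ (-fl) - (Fintype.card B : ℝ) ^ (-cl))⌋)
    (b : Fin d → ℕ)
    (g : (j : Fin d) → (F →ₗ[B] (Fin (b j) → B)))
    (h : ((j : Fin d) → (Fin (b j) → B)) →ₗ[B] (Fin ℓ → F))
    (hscheme : ∀ f : Polynomial F, f.degree < (k : WithBot ℕ) →
      h (fun j => g j (f.eval (α j))) = fun i => f.eval (β i)) :
    n₀ * fl + ((d : ℤ) - n₀) * cl ≤ ∑ j, (b j : ℤ) :=
  repair_bandwidth_lower_bound_general ℓ d k hℓ β α hinj L hL hnotint fl cl n₀ hfl hcl hn₀ b g h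
    hscheme
end
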